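/- arXiv:2305.08269 — 2 statements merged into one kernel-verified Lean document; each statement's English description precedes it below -/
import Mathlib

section
/- Let n and L be positive integers with L + 1 ≤ n, let x ∈ {1} × [n]^L be good, and let j ∈ [L]. Then the number of good sequences y ∈ {1} × [n]^L with max{i ∈ [L+1] : (x_1, …, x_i) = (y_1, …, y_i)} = j equals (n − j − 1)·∏_{i=j+2}^{L+1} (n − i + 1). -/
/-- The maximum (1-based) index `j` such that `(x_1, …, x_j) = (y_1, …, y_j)`. -/
def maxPrefix {n L : ℕ} (x y : Fin (L + 1) → Fin n) : ℕ :=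
  ((Finset.Icc 1 (L + 1)).filter fun j => ∀ i : Fin (L + 1), (i : ℕ) < j → x i = y i).sup id

/-!
A good `y` has `maxPrefix x y = j` exactly when it agrees with `x` on the first `j` entries but
not on the first `j + 1`. Injective sequences extending a fixed injective prefix of length `k`
are embeddings of the remaining `L + 1 - k` positions into the `n - k` unused values, so there
are `(n - k)(n - k - 1)⋯(n - L)` of them. The count is the difference of these numbers for
`k = j` and `k = j + 1`, i.e. `(n - j) D - D` with `D = ∏_{i=j+2}^{L+1} (n - i + 1)`.
-/

open Function Finset

theorem Fintype.card_embedding_sum_extending {α β γ : Type*} [Fintype α] [Fintype β]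
    [Fintype γ] [DecidableEq γ] (f : α ↪ γ) :
    Fintype.card {g : α ⊕ β ↪ γ // Embedding.inl.trans g = f} =
      (Fintype.card γ - Fintype.card α).descFactorial (Fintype.card β) := by
  have e : {g : α ⊕ β ↪ γ // Embedding.inl.trans g = f} ≃ (β ↪ ↥(Set.range f)ᶜ) :=
    (Equiv.sumEmbeddingEquivSigmaEmbeddingRestricted.subtypeEquiv fun _ => Iff.rfl).trans
      (Equiv.sigmaSubtype f)
  rw [Fintype.card_congr e, Fintype.card_embedding_eq, Fintype.card_compl_set,
    Fintype.card_range]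

theorem Fintype.card_embedding_extending {α γ : Type*} [Fintype α] [Fintype γ] [DecidableEq γ]
    (p : α → Prop) [DecidablePred p] (f : α ↪ γ) :
    Fintype.card {g : α ↪ γ // ∀ a, p a → g a = f a} =
      (Fintype.card γ - Fintype.card {a // p a}).descFactorial (Fintype.card {a // ¬ p a}) := by
  rw [← Fintype.card_embedding_sum_extending ((Embedding.subtype p).trans f)]
  refine Fintype.card_congr ((Equiv.embeddingCongr (Equiv.sumCompl p).symm (.refl γ)).subtypeEquiv
    fun g => ?_)
  simp [DFunLike.ext_iff]

theorem card_injective_extending {α γ : Type*} [Fintype α] [DecidableEq α] [Fintype γ]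
    [DecidableEq γ] (p : α → Prop) [DecidablePred p] {x : α → γ} (hx : Injective x) :
    #{y : α → γ | Injective y ∧ ∀ a, p a → y a = x a} =
      (Fintype.card γ - Fintype.card {a // p a}).descFactorial (Fintype.card {a // ¬ p a}) := by
  rw [← Fintype.card_embedding_extending p ⟨x, hx⟩, ← Fintype.card_subtype]
  exact Fintype.card_congr ((Equiv.subtypeSubtypeEquivSubtypeInter _ _).symm.trans
    ((Equiv.subtypeInjectiveEquivEmbedding α γ).subtypeEquiv fun _ => Iff.rfl))

theorem Fin.card_injective_agreeing_below {γ : Type*} [Fintype γ] [DecidableEq γ] {m k : ℕ}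
    (hk : k ≤ m) {x : Fin m → γ} (hx : Injective x) :
    #{y : Fin m → γ | Injective y ∧ ∀ i : Fin m, (i : ℕ) < k → y i = x i} =
      (Fintype.card γ - k).descFactorial (m - k) := by
  have hcard : Fintype.card {i : Fin m // (i : ℕ) < k} = k := by
    rw [Fintype.card_subtype, Fin.card_filter_val_lt, min_eq_right hk]
  have h := card_injective_extending (fun i : Fin m => (i : ℕ) < k) hx
  rw [Fintype.card_subtype_compl, hcard, Fintype.card_fin] at h
  -- the two sides differ only in the `Decidable` instance of `∀ i : Fin m, _`
  convert h using 4

theorem maxPrefix_eq_iff {n L j : ℕ} {x y : Fin (L + 1) → Fin n} (hj1 : 1 ≤ j)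
    (hjL : j ≤ L) :
    maxPrefix x y = j ↔
      (∀ i : Fin (L + 1), (i : ℕ) < j → y i = x i) ∧
        ¬ ∀ i : Fin (L + 1), (i : ℕ) < j + 1 → y i = x i := by
  set s := (Icc 1 (L + 1)).filter fun m => ∀ i : Fin (L + 1), (i : ℕ) < m → x i = y i
  have mem_s {m : ℕ} (hm1 : 1 ≤ m) (hmL : m ≤ L + 1) :
      m ∈ s ↔ ∀ i : Fin (L + 1), (i : ℕ) < m → y i = x i := by
    simp [s, hm1, hmL, eq_comm]
  have agree_of_mem {m : ℕ} (hm : m ∈ s) (i : Fin (L + 1)) (hi : (i : ℕ) < m) : y i = x i :=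
    ((mem_filter.1 hm).2 i hi).symm
  change s.sup id = j ↔ _
  constructor
  · intro hsup
    obtain ⟨b, hb, hbsup⟩ := exists_mem_eq_sup s (nonempty_of_ne_empty fun h => by
      simp [h] at hsup; omega) id
    obtain rfl : b = j := hbsup.symm.trans hsup
    refine ⟨agree_of_mem hb, fun hnext => ?_⟩
    have := le_sup (f := id) ((mem_s (by omega) (by omega)).2 hnext)
    simp only [id, hsup] at this
    omega
  · rintro ⟨hj, hnext⟩
    refine le_antisymm (Finset.sup_le fun m hm => ?_)
      (le_sup (f := id) ((mem_s hj1 (by omega)).2 hj))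
    by_contra! hjm
    exact hnext fun i hi => agree_of_mem hm i (by simp at hjm; omega)

theorem prod_Icc_sub_add_one_eq_descFactorial {n a b : ℕ} (hb : b ≤ n) :
    ∏ i ∈ Icc (a + 1) b, (n - i + 1) = (n - a).descFactorial (b - a) := by
  rw [Nat.descFactorial_eq_prod_range, ← Finset.Ico_add_one_right_eq_Icc,
      Finset.prod_Ico_eq_prod_range, show b + 1 - (a + 1) = b - a by omega]
  refine prod_congr rfl fun i hi => ?_
  have := mem_range.1 hi
  omega

theorem stmt9_general (n L : ℕ) (hn : 0 < n) (hLn : L + 1 ≤ n)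
    (x : Fin (L + 1) → Fin n) (hx0 : x 0 = (⟨0, hn⟩ : Fin n))
    (hxgood : Function.Injective x)
    (j : ℕ) (hj1 : 1 ≤ j) (hjL : j ≤ L) :
    (Finset.univ.filter
        (fun y : Fin (L + 1) → Fin n =>
          y 0 = (⟨0, hn⟩ : Fin n) ∧ Function.Injective y ∧ maxPrefix x y = j)).card =
      (n - j - 1) * ∏ i ∈ Finset.Icc (j + 2) (L + 1), (n - i + 1) := by
  let agreeing (k : ℕ) : Finset (Fin (L + 1) → Fin n) :=
    {y | Injective y ∧ ∀ i : Fin (L + 1), (i : ℕ) < k → y i = x i}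
  have hsplit : ({y | y 0 = ⟨0, hn⟩ ∧ Injective y ∧ maxPrefix x y = j} :
      Finset (Fin (L + 1) → Fin n)) = agreeing j \ agreeing (j + 1) := by
    ext y
    simp only [agreeing, mem_filter, mem_univ, true_and, mem_sdiff, maxPrefix_eq_iff hj1 hjL]
    constructor
    · rintro ⟨-, hy, hj, hnext⟩
      exact ⟨⟨hy, hj⟩, fun h => hnext h.2⟩
    · rintro ⟨⟨hy, hj⟩, hnext⟩
      exact ⟨hx0 ▸ hj 0 (by simp; omega), hy, hj, fun h => hnext ⟨hy, h⟩⟩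
  have hsub : agreeing (j + 1) ⊆ agreeing j := by
    intro y
    simp only [agreeing, mem_filter, mem_univ, true_and]
    exact And.imp_right fun h i hi => h i (by omega)
  obtain ⟨a, ha⟩ : ∃ a, n - j = a + 1 := ⟨n - j - 1, by omega⟩
  rw [hsplit, card_sdiff_of_subset hsub, Fin.card_injective_agreeing_below (by omega) hxgood,
    Fin.card_injective_agreeing_below (by omega) hxgood, prod_Icc_sub_add_one_eq_descFactorial hLn,
    Fintype.card_fin, show n - (j + 1) = a by omega, show L + 1 - (j + 1) = L - j by omega,
    show L + 1 - j = L - j + 1 by omega, ha, Nat.succ_descFactorial_succ, Nat.succ_mul]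
  simp only [Nat.add_sub_cancel]

/-- Let `n, L` be positive integers with `L + 1 ≤ n`, let
`x ∈ {1} × [n]^L` be good, and let `j ∈ [L]`.  Then the number of good sequences
`y ∈ {1} × [n]^L` with `max{i : (x_1,…,x_i) = (y_1,…,y_i)} = j` equals
`(n − j − 1) · ∏_{i=j+2}^{L+1} (n − i + 1)`. -/
theorem stmt9 (n L : ℕ) (hn : 0 < n) (hL : 0 < L) (hLn : L + 1 ≤ n)
    (x : Fin (L + 1) → Fin n) (hx0 : x 0 = (⟨0, hn⟩ : Fin n))
    (hxgood : Function.Injective x)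
    (j : ℕ) (hj1 : 1 ≤ j) (hjL : j ≤ L) :
    (Finset.univ.filter
        (fun y : Fin (L + 1) → Fin n =>
          y 0 = (⟨0, hn⟩ : Fin n) ∧ Function.Injective y ∧ maxPrefix x y = j)).card =
      (n - j - 1) * ∏ i ∈ Finset.Icc (j + 2) (L + 1), (n - i + 1) :=
  stmt9_general n L hn hLn x hx0 hxgood j hj1 hjL
end

section
/- Assume 2 ≤ L + 1 and (L+1)² ≤ n. Then for every good sequence x ∈ {1} × [n]^L and every b_1 ∈ {0,1}: Σ over y ∈ {1} × [n]^L and b_2 ∈ {0,1} of r((x,b_1),(y,b_2)) ≥ (1/(2e))·(L+1)·n^{L+1}, where e is Euler's number. -/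
/-- The relation `r`: zero if the bits agree or either sequence is not good (injective),
and `n ^ maxPrefix` otherwise. -/
noncomputable def rrel {n L : ℕ} (p q : (Fin (L + 1) → Fin n) × Bool) : ℝ :=
  if p.2 = q.2 ∨ ¬ Function.Injective p.1 ∨ ¬ Function.Injective q.1 then 0
  else (n : ℝ) ^ maxPrefix p.1 q.1

open Finset Function

lemma descFactorial_le_card_injective_eqOn {ι α : Type*} [Fintype ι] [DecidableEq ι]
    [Fintype α] [DecidableEq α] (x : ι → α) (s : Finset ι) (hx : Set.InjOn x s) :
    (Fintype.card α - #s).descFactorial (Fintype.card ι - #s) ≤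
      #{y : ι → α | Injective y ∧ ∀ i ∈ s, y i = x i} := by
  let extend (g : ↥sᶜ ↪ ↥(s.image x)ᶜ) (i : ι) : α :=
    if h : i ∈ s then x i else g ⟨i, mem_compl.2 h⟩
  have extend_injective (g : ↥sᶜ ↪ ↥(s.image x)ᶜ) : Injective (extend g) := by
    have outside (i j : ι) (hi : i ∈ s) (hj : j ∉ s) : x i ≠ g ⟨j, mem_compl.2 hj⟩ :=
      fun h => mem_compl.1 (g ⟨j, mem_compl.2 hj⟩).2 (h ▸ mem_image_of_mem x hi)
    intro i j hij
    by_cases hi : i ∈ s <;> by_cases hj : j ∈ s <;>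
      simp only [extend, hi, hj, dite_true, dite_false] at hij
    · exact hx hi hj hij
    · exact absurd hij (outside i j hi hj)
    · exact absurd hij.symm (outside j i hj hi)
    · simpa using g.injective (Subtype.ext hij)
  have hcard : Fintype.card (↥sᶜ ↪ ↥(s.image x)ᶜ) =
      (Fintype.card α - #s).descFactorial (Fintype.card ι - #s) := by
    rw [Fintype.card_embedding_eq, Fintype.card_coe, Fintype.card_coe, card_compl, card_compl,
      card_image_of_injOn hx]
  rw [← hcard, ← card_univ]
  refine card_le_card_of_injOn extend (fun g _ => ?_) (fun g _ g' _ h => ?_)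
  · exact mem_filter.2 ⟨mem_univ _, extend_injective g, fun i hi => dif_pos hi⟩
  · ext ⟨i, hi⟩
    simpa [extend, mem_compl.1 hi] using congrFun h i

lemma pow_le_card_injective_agree {n L j : ℕ} (hLn : L + 1 ≤ n) (hj : j ≤ L)
    (x : Fin (L + 1) → Fin n) (hx : Injective x) :
    (n - L) ^ (L - j) ≤
      #{y : Fin (L + 1) → Fin n | Injective y ∧ ∀ i : Fin (L + 1), (i : ℕ) ≤ j → y i = x i} := by
  have hcount := descFactorial_le_card_injective_eqOn x (Iic ⟨j, by omega⟩) hx.injOn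
  simp only [Fintype.card_fin, Fin.card_Iic, mem_Iic, Fin.le_def] at hcount
  have hpow := (Nat.pow_sub_le_descFactorial (n - (j + 1)) (L + 1 - (j + 1))).trans hcount
  rwa [show n - (j + 1) + 1 - (L + 1 - (j + 1)) = n - L by omega,
    show L + 1 - (j + 1) = L - j by omega] at hpow

lemma lt_maxPrefix {n L j : ℕ} {x y : Fin (L + 1) → Fin n} (hj : j ≤ L)
    (h : ∀ i : Fin (L + 1), (i : ℕ) ≤ j → y i = x i) : j < maxPrefix x y :=
  Finset.le_sup (f := id) (b := j + 1) (mem_filter.2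
    ⟨mem_Icc.2 ⟨by omega, by omega⟩, fun i hi => (h i (by omega)).symm⟩)

lemma sum_bool_rrel {n L : ℕ} {x : Fin (L + 1) → Fin n} (hx : Injective x) (b₁ : Bool)
    (y : Fin (L + 1) → Fin n) :
    ∑ b₂ : Bool, rrel (x, b₁) (y, b₂) = if Injective y then (n : ℝ) ^ maxPrefix x y else 0 := by
  by_cases hy : Injective y <;> cases b₁ <;> simp [rrel, hx, hy]

lemma sum_agree_weight_le_pow_maxPrefix {n L : ℕ} (x y : Fin (L + 1) → Fin n) :
    ∑ j ∈ range (L + 1),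
        (if ∀ i : Fin (L + 1), (i : ℕ) ≤ j → y i = x i then (n : ℝ) ^ j * (n - 1) else 0) ≤
      (n : ℝ) ^ maxPrefix x y := by
  have hn : (1 : ℝ) ≤ n := by exact_mod_cast (y 0).pos
  rw [← sum_filter]
  calc _ ≤ ∑ j ∈ range (maxPrefix x y), (n : ℝ) ^ j * (n - 1) := by
        refine sum_le_sum_of_subset_of_nonneg (fun j hj => ?_) (fun j _ _ => by
          have := sub_nonneg.2 hn; positivity)
        obtain ⟨hjL, hagree⟩ := mem_filter.1 hj
        exact mem_range.2 (lt_maxPrefix (by simpa [Nat.lt_succ_iff] using hjL) hagree)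
    _ = (n : ℝ) ^ maxPrefix x y - 1 := by rw [← sum_mul, geom_sum_mul]
    _ ≤ _ := by linarith

lemma one_div_two_mul_exp_one_le_pow (L : ℕ) (hL : 1 ≤ L) :
    1 / (2 * Real.exp 1) ≤ ((L : ℝ) / (L + 1)) ^ (L + 1) := by
  have hL' : (1 : ℝ) ≤ L := by exact_mod_cast hL
  have hinv : 1 / Real.exp 1 ≤ ((L : ℝ) / (L + 1)) ^ L := by
    have hq : (L : ℝ) / (L + 1) = (1 + (L : ℝ)⁻¹)⁻¹ := by field_simp
    rw [hq, inv_pow, one_div]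
    exact inv_anti₀ (by positivity) Real.one_add_inv_pow_le_exp
  have hhalf : 1 / 2 ≤ (L : ℝ) / (L + 1) := by
    rw [div_le_div_iff₀ (by norm_num) (by positivity)]; linarith
  calc 1 / (2 * Real.exp 1) = 1 / Real.exp 1 * (1 / 2) := by ring
    _ ≤ ((L : ℝ) / (L + 1)) ^ L * ((L : ℝ) / (L + 1)) :=
        mul_le_mul hinv hhalf (by norm_num) (by positivity)
    _ = _ := (pow_succ _ _).symm

lemma one_div_two_mul_exp_one_mul_pow_le {n L j : ℕ} (hL : 1 ≤ L) (hn : L * (L + 1) ≤ n)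
    (hj : j ≤ L) :
    1 / (2 * Real.exp 1) * (n : ℝ) ^ (L + 1) ≤ (n : ℝ) ^ j * (n - 1) * (n - L) ^ (L - j) := by
  have hL' : (1 : ℝ) ≤ L := by exact_mod_cast hL
  have hn' : (L : ℝ) * (L + 1) ≤ n := by exact_mod_cast hn
  have hLn : (L : ℝ) ≤ n := by nlinarith
  set q : ℝ := L / (L + 1) with hq
  have hq1 : q ≤ 1 := by rw [hq, div_le_one (by positivity)]; linarith
  have hnq : n * q ≤ n - L := by
    rw [hq, mul_div_assoc', div_le_iff₀ (by positivity)]; linarith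
  calc 1 / (2 * Real.exp 1) * (n : ℝ) ^ (L + 1) ≤ q ^ (L + 1) * (n : ℝ) ^ (L + 1) := by
        gcongr; exact one_div_two_mul_exp_one_le_pow L hL
    _ ≤ q ^ (L + 1 - j) * (n : ℝ) ^ (L + 1) := by
        exact mul_le_mul_of_nonneg_right (pow_le_pow_of_le_one (by positivity) hq1 (by omega))
          (by positivity)
    _ = (n : ℝ) ^ j * (n * q) ^ (L + 1 - j) := by
        rw [mul_pow, ← mul_assoc, ← pow_add, Nat.add_sub_cancel' (by omega), mul_comm]
    _ ≤ (n : ℝ) ^ j * (n - L) ^ (L + 1 - j) := by gcongr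
    _ = (n : ℝ) ^ j * (n - L) * (n - L) ^ (L - j) := by
        rw [mul_assoc, ← pow_succ', Nat.sub_add_comm hj]
    _ ≤ _ := by
        have := sub_nonneg.2 hLn
        gcongr

/-- Assume `2 ≤ L + 1` and `(L+1)² ≤ n`.  Then for every good sequence
`x ∈ {1} × [n]^L` and every `b₁ ∈ {0,1}`:
`Σ_{y ∈ {1} × [n]^L} Σ_{b₂ ∈ {0,1}} r((x,b₁),(y,b₂)) ≥ (1/(2e)) · (L+1) · n^{L+1}`. -/
theorem stmt10 (n L : ℕ) (hn : 0 < n) (hL2 : 2 ≤ L + 1) (hLn : (L + 1) ^ 2 ≤ n)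
    (x : Fin (L + 1) → Fin n) (hx0 : x 0 = (⟨0, hn⟩ : Fin n))
    (hxgood : Function.Injective x) (b₁ : Bool) :
    (1 / (2 * Real.exp 1)) * ((L : ℝ) + 1) * (n : ℝ) ^ (L + 1) ≤
      ∑ y ∈ Finset.univ.filter (fun y : Fin (L + 1) → Fin n => y 0 = (⟨0, hn⟩ : Fin n)),
        ∑ b₂ : Bool, rrel (x, b₁) (y, b₂) := by
  have hLn' : L * (L + 1) ≤ n := by nlinarith
  have hn1 : (1 : ℝ) ≤ n := by exact_mod_cast hn
  set G := univ.filter fun y : Fin (L + 1) → Fin n => y 0 = (⟨0, hn⟩ : Fin n)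
  set P : ℕ → (Fin (L + 1) → Fin n) → Prop :=
    fun j y => ∀ i : Fin (L + 1), (i : ℕ) ≤ j → y i = x i
  have hcount (j : ℕ) (hj : j ≤ L) :
      (((n - L) ^ (L - j) : ℕ) : ℝ) ≤ #{y ∈ G | Injective y ∧ P j y} := by
    refine Nat.cast_le.2 ((pow_le_card_injective_agree (by nlinarith) hj x hxgood).trans
      (card_le_card fun y hy => ?_))
    obtain ⟨hy, hagree⟩ := (mem_filter.1 hy).2
    exact mem_filter.2 ⟨mem_filter.2 ⟨mem_univ _, hx0 ▸ hagree 0 (Nat.zero_le j)⟩, hy, hagree⟩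
  calc (1 / (2 * Real.exp 1)) * ((L : ℝ) + 1) * (n : ℝ) ^ (L + 1)
      = ∑ _j ∈ range (L + 1), 1 / (2 * Real.exp 1) * (n : ℝ) ^ (L + 1) := by
        rw [sum_const, card_range, nsmul_eq_mul]; push_cast; ring
    _ ≤ ∑ j ∈ range (L + 1), (n : ℝ) ^ j * (n - 1) * #{y ∈ G | Injective y ∧ P j y} := by
        refine sum_le_sum fun j hj => ?_
        have hjL : j ≤ L := Nat.lt_succ_iff.1 (mem_range.1 hj)
        refine (one_div_two_mul_exp_one_mul_pow_le (by omega) hLn' hjL).trans ?_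
        have := sub_nonneg.2 hn1
        gcongr
        simpa [Nat.cast_sub (by nlinarith : L ≤ n)] using hcount j hjL
    _ = ∑ y ∈ G, ∑ j ∈ range (L + 1),
          if Injective y ∧ P j y then (n : ℝ) ^ j * (n - 1) else 0 := by
        simp only [natCast_card_filter, mul_sum, mul_boole]
        exact sum_comm
    _ ≤ ∑ y ∈ G, if Injective y then (n : ℝ) ^ maxPrefix x y else 0 := by
        gcongr with y
        split_ifs with hy
        · simpa [hy] using sum_agree_weight_le_pow_maxPrefix x y
        · simp [hy]
    _ = _ := sum_congr rfl fun y _ => (sum_bool_rrel hxgood b₁ y).symm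
end
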